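/- arXiv:2505.02132 — 2 statements merged into one kernel-verified Lean document; each statement's English description precedes it below -/
import Mathlib

section
/- For every grid function ω in V⁰ one has ‖ω‖_A ≤ √2·‖ω‖ and (√6/3)·‖ω‖ ≤ ‖ω‖_B ≤ (2√3/3)·‖ω‖. -/
open Finset

noncomputable section

/-- spatial mesh size `h = 1/(2J)` -/
def msh (J : ℕ) : ℝ := 1 / (2 * (J : ℝ))

/-- discrete inner product `⟨Q, W⟩ = h ∑_{j=1}^{2J-1} Q_j W_j` -/
def gridIP (J : ℕ) (Q W : ℕ → ℝ) : ℝ :=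
  msh J * ∑ j ∈ Finset.Icc 1 (2 * J - 1), Q j * W j

/-- discrete `L²` norm -/
def gridNorm (J : ℕ) (Q : ℕ → ℝ) : ℝ :=
  Real.sqrt (gridIP J Q Q)

/-- the norm `‖Q‖_A = √(2h ∑_{j=1}^{J} Q_{2j-1}²)` -/
def gridNormA (J : ℕ) (Q : ℕ → ℝ) : ℝ :=
  Real.sqrt (2 * msh J * ∑ j ∈ Finset.Icc 1 J, Q (2 * j - 1) ^ 2)

/-- the norm `‖Q‖_B = √((2/3)‖Q‖² + (1/3)‖Q‖_A²)` -/
def gridNormB (J : ℕ) (Q : ℕ → ℝ) : ℝ :=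
  Real.sqrt ((2 / 3) * gridNorm J Q ^ 2 + (1 / 3) * gridNormA J Q ^ 2)

/-- compact operator `𝒜ω_j = (ω_{j+1} + 10 ω_j + ω_{j-1})/12` (interior formula) -/
def cA (ω : ℕ → ℝ) (j : ℕ) : ℝ := (ω (j + 1) + 10 * ω j + ω (j - 1)) / 12

/-- second difference `δ_xδ_x̄ ω_j = (ω_{j+1} - 2ω_j + ω_{j-1})/h²` -/
def dxx (J : ℕ) (ω : ℕ → ℝ) (j : ℕ) : ℝ :=
  (ω (j + 1) - 2 * ω j + ω (j - 1)) / msh J ^ 2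

/-- forward difference `δ_x ω_j = (ω_{j+1} - ω_j)/h` -/
def dxf (J : ℕ) (ω : ℕ → ℝ) (j : ℕ) : ℝ := (ω (j + 1) - ω j) / msh J

/-! The odd-indexed nodes `2j - 1`, `1 ≤ j ≤ J`, are among the interior nodes `1, …, 2J - 1`,
so `‖Q‖_A² ≤ 2‖Q‖²`; the bounds on `‖Q‖_B` follow by inserting `0 ≤ ‖Q‖_A² ≤ 2‖Q‖²`
into its definition. -/

theorem sum_Icc_odd_le_sum_Icc {f : ℕ → ℝ} (hf : ∀ j, 0 ≤ f j) (J : ℕ) :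
    ∑ j ∈ Icc 1 J, f (2 * j - 1) ≤ ∑ j ∈ Icc 1 (2 * J - 1), f j := by
  have hinj : Set.InjOn (fun j => 2 * j - 1) (Icc 1 J : Finset ℕ) := by
    intro a ha b hb hab
    simp only [coe_Icc, Set.mem_Icc] at ha hb
    dsimp only at hab
    omega
  rw [← sum_image hinj]
  refine sum_le_sum_of_subset_of_nonneg ?_ fun j _ _ => hf j
  intro x hx
  simp only [mem_image, mem_Icc] at hx ⊢
  omega

theorem msh_nonneg (J : ℕ) : 0 ≤ msh J := by
  unfold msh
  positivity

theorem gridNormA_le_sqrt_two_mul_gridNorm (J : ℕ) (Q : ℕ → ℝ) :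
    gridNormA J Q ≤ Real.sqrt 2 * gridNorm J Q := by
  rw [gridNormA, gridNorm, gridIP, ← Real.sqrt_mul zero_le_two, ← mul_assoc]
  gcongr
  · exact mul_nonneg zero_le_two (msh_nonneg J)
  · simpa only [sq] using sum_Icc_odd_le_sum_Icc (fun j => mul_self_nonneg (Q j)) J

theorem gridNormA_sq_le (J : ℕ) (Q : ℕ → ℝ) : gridNormA J Q ^ 2 ≤ 2 * gridNorm J Q ^ 2 := by
  calc gridNormA J Q ^ 2 ≤ (Real.sqrt 2 * gridNorm J Q) ^ 2 := by
        gcongr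
        · exact Real.sqrt_nonneg _
        · exact gridNormA_le_sqrt_two_mul_gridNorm J Q
    _ = 2 * gridNorm J Q ^ 2 := by rw [mul_pow, Real.sq_sqrt zero_le_two]

theorem sqrt_six_div_three_mul_gridNorm_le_gridNormB (J : ℕ) (Q : ℕ → ℝ) :
    Real.sqrt 6 / 3 * gridNorm J Q ≤ gridNormB J Q := by
  refine Real.le_sqrt_of_sq_le ?_
  rw [mul_pow, div_pow, Real.sq_sqrt (by norm_num : (0 : ℝ) ≤ 6)]
  linarith [sq_nonneg (gridNormA J Q)]

theorem gridNormB_le_two_sqrt_three_div_three_mul_gridNorm (J : ℕ) (Q : ℕ → ℝ) :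
    gridNormB J Q ≤ 2 * Real.sqrt 3 / 3 * gridNorm J Q := by
  have hN : 0 ≤ gridNorm J Q := Real.sqrt_nonneg _
  rw [gridNormB, Real.sqrt_le_iff, mul_pow, div_pow, mul_pow,
    Real.sq_sqrt (by norm_num : (0 : ℝ) ≤ 3)]
  refine ⟨by positivity, ?_⟩
  linarith [gridNormA_sq_le J Q]

theorem stmt_4_general (J : ℕ) (ω : ℕ → ℝ) :
    gridNormA J ω ≤ Real.sqrt 2 * gridNorm J ω ∧
      Real.sqrt 6 / 3 * gridNorm J ω ≤ gridNormB J ω ∧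
      gridNormB J ω ≤ 2 * Real.sqrt 3 / 3 * gridNorm J ω :=
  ⟨gridNormA_le_sqrt_two_mul_gridNorm J ω, sqrt_six_div_three_mul_gridNorm_le_gridNormB J ω,
    gridNormB_le_two_sqrt_three_div_three_mul_gridNorm J ω⟩

/-- For every `ω ∈ V⁰`, `‖ω‖_A ≤ √2 ‖ω‖` and
`(√6/3)‖ω‖ ≤ ‖ω‖_B ≤ (2√3/3)‖ω‖`. -/
theorem stmt_4 (J : ℕ) (hJ : 0 < J) (ω : ℕ → ℝ)
    (hω0 : ω 0 = 0) (hωJ : ω (2 * J) = 0) :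
    gridNormA J ω ≤ Real.sqrt 2 * gridNorm J ω ∧
      Real.sqrt 6 / 3 * gridNorm J ω ≤ gridNormB J ω ∧
      gridNormB J ω ≤ 2 * Real.sqrt 3 / 3 * gridNorm J ω :=
  stmt_4_general J ω
end
end

section
/- Suppose P : ℝ → ℝ satisfies P(z) ≥ p₀ > 0 for all z ≥ 0, and suppose grid-function sequences (U^n)_{n=0}^{N+1}, (V^n)_{n=0}^{N+1} in V⁰ satisfy the fully discrete compact scheme with zero source: for all 1 ≤ n ≤ N and 1 ≤ j ≤ 2J−1, 𝒜δ_t⁽²⁾U_j^n + P(‖V^n‖_B²)·𝒜δ̄_tU_j^n + δ_xδ_x̄Ṽ_j^n = 0 and 𝒜δ̄_tV_j^n = δ_xδ_x̄δ̄_tU_j^n. Then the discrete energy Ê^n := √(‖𝒜δ_tU^{n+1}‖² + (1/2)(‖𝒜V^{n+1}‖² + ‖𝒜V^n‖²)) satisfies 0 ≤ Ê^n ≤ Ê^0 for all 1 ≤ n ≤ N. -/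
/-!
Take the discrete inner product of the first equation with `𝒜 δ̄_t Uⁿ`. Since
`δ_t⁽²⁾Uⁿ = (δ_tUⁿ⁺¹ - δ_tUⁿ)/τ` and `δ̄_tUⁿ = (δ_tUⁿ⁺¹ + δ_tUⁿ)/2`, the inertial term is a
difference of kinetic energies. Writing `𝒜 = I + (h²/12) δ_xδ_x̄` and summing by parts, `δ_xδ_x̄`
and `𝒜` may be exchanged in the coupling term, and the second equation turns it into a difference
of potential energies. What remains is the damping term `2τ P ‖𝒜 δ̄_t Uⁿ‖² ≥ 0`, so the squared
energy decreases at every step.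
-/

open Finset

noncomputable section

/-- the discrete energy `Ê^n = √(‖𝒜δ_t U^{n+1}‖² + (1/2)(‖𝒜V^{n+1}‖² + ‖𝒜V^n‖²))` -/
def energyE (J : ℕ) (τ : ℝ) (U V : ℕ → ℕ → ℝ) (n : ℕ) : ℝ :=
  Real.sqrt (gridNorm J (cA fun i => (U (n + 1) i - U n i) / τ) ^ 2
    + 1 / 2 * (gridNorm J (cA (V (n + 1))) ^ 2 + gridNorm J (cA (V n)) ^ 2))

def VanishesAtEnds (M : ℕ) (w : ℕ → ℝ) : Prop := w 0 = 0 ∧ w M = 0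

theorem sum_Icc_sub_pred {G : Type*} [AddCommGroup G] (T : ℕ → G) (M : ℕ) :
    ∑ j ∈ Icc 1 M, (T j - T (j - 1)) = T M - T 0 := by
  induction M with
  | zero => simp
  | succ m ih =>
    rw [sum_Icc_succ_top (by omega), ih, Nat.add_sub_cancel]
    abel

theorem sum_secondDiff_mul_comm {M : ℕ} {w z : ℕ → ℝ} (hw : VanishesAtEnds M w)
    (hz : VanishesAtEnds M z) :
    ∑ j ∈ Icc 1 (M - 1), (w (j + 1) - 2 * w j + w (j - 1)) * z j
      = ∑ j ∈ Icc 1 (M - 1), w j * (z (j + 1) - 2 * z j + z (j - 1)) := by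
  set T : ℕ → ℝ := fun j => w (j + 1) * z j - w j * z (j + 1)
  have flux : ∀ j ∈ Icc 1 (M - 1),
      (w (j + 1) - 2 * w j + w (j - 1)) * z j - w j * (z (j + 1) - 2 * z j + z (j - 1))
        = T j - T (j - 1) := by
    intro j hj
    obtain ⟨i, rfl⟩ : ∃ i, j = i + 1 := ⟨j - 1, by grind⟩
    simp only [T, Nat.add_sub_cancel]
    ring
  rw [← sub_eq_zero, ← sum_sub_distrib, sum_congr rfl flux, sum_Icc_sub_pred]
  rcases M with _ | M
  · simp
  · simp [T, hw.1, hw.2, hz.1, hz.2]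

section SecondDifference

variable {J : ℕ}

theorem msh_pos (hJ : 0 < J) : 0 < msh J := by
  unfold msh
  positivity

theorem sum_dxx_mul_comm {w z : ℕ → ℝ} (hw : VanishesAtEnds (2 * J) w)
    (hz : VanishesAtEnds (2 * J) z) :
    ∑ j ∈ Icc 1 (2 * J - 1), dxx J w j * z j = ∑ j ∈ Icc 1 (2 * J - 1), w j * dxx J z j := by
  simp only [dxx, div_mul_eq_mul_div, mul_div_assoc', ← sum_div, sum_secondDiff_mul_comm hw hz]

theorem cA_eq_add_dxx (hJ : 0 < J) (w : ℕ → ℝ) (j : ℕ) :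
    cA w j = w j + msh J ^ 2 / 12 * dxx J w j := by
  have := (msh_pos hJ).ne'
  simp only [cA, dxx]
  field_simp
  ring

theorem sum_dxx_mul_cA_comm (hJ : 0 < J) {w z : ℕ → ℝ} (hw : VanishesAtEnds (2 * J) w)
    (hz : VanishesAtEnds (2 * J) z) :
    ∑ j ∈ Icc 1 (2 * J - 1), dxx J w j * cA z j
      = ∑ j ∈ Icc 1 (2 * J - 1), cA w j * dxx J z j := by
  simp only [cA_eq_add_dxx hJ, mul_add, add_mul, sum_add_distrib, sum_dxx_mul_comm hw hz]
  congr 1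
  exact sum_congr rfl fun j _ => by ring

end SecondDifference

theorem gridIP_self_nonneg (J : ℕ) (Q : ℕ → ℝ) : 0 ≤ gridIP J Q Q := by
  unfold gridIP msh
  have := sum_nonneg fun j (_ : j ∈ Icc 1 (2 * J - 1)) => mul_self_nonneg (Q j)
  positivity

theorem gridNorm_sq (J : ℕ) (Q : ℕ → ℝ) : gridNorm J Q ^ 2 = gridIP J Q Q :=
  Real.sq_sqrt (gridIP_self_nonneg J Q)

def levelEnergy (J : ℕ) (τ : ℝ) (u₀ u₁ v₀ v₁ : ℕ → ℝ) : ℝ :=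
  gridIP J (cA fun i => (u₁ i - u₀ i) / τ) (cA fun i => (u₁ i - u₀ i) / τ)
    + 1 / 2 * (gridIP J (cA v₁) (cA v₁) + gridIP J (cA v₀) (cA v₀))

theorem energyE_eq_sqrt_levelEnergy (J : ℕ) (τ : ℝ) (U V : ℕ → ℕ → ℝ) (n : ℕ) :
    energyE J τ U V n = √(levelEnergy J τ (U n) (U (n + 1)) (V n) (V (n + 1))) := by
  simp only [energyE, levelEnergy, gridNorm_sq]

theorem levelEnergy_add_damping_eq {J : ℕ} (hJ : 0 < J) {τ : ℝ} (hτ : τ ≠ 0) (p : ℝ)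
    {u₀ u₁ u₂ v₀ v₁ v₂ : ℕ → ℝ}
    (hu₀ : VanishesAtEnds (2 * J) u₀) (hu₂ : VanishesAtEnds (2 * J) u₂)
    (hv₀ : VanishesAtEnds (2 * J) v₀) (hv₂ : VanishesAtEnds (2 * J) v₂)
    (heq₁ : ∀ j ∈ Icc 1 (2 * J - 1),
      cA (fun i => (u₂ i - 2 * u₁ i + u₀ i) / τ ^ 2) j
        + p * cA (fun i => (u₂ i - u₀ i) / (2 * τ)) j
        + dxx J (fun i => (v₂ i + v₀ i) / 2) j = 0)
    (heq₂ : ∀ j ∈ Icc 1 (2 * J - 1),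
      cA (fun i => (v₂ i - v₀ i) / (2 * τ)) j = dxx J (fun i => (u₂ i - u₀ i) / (2 * τ)) j) :
    levelEnergy J τ u₁ u₂ v₁ v₂
        + 2 * τ * p * gridIP J (cA fun i => (u₂ i - u₀ i) / (2 * τ))
            (cA fun i => (u₂ i - u₀ i) / (2 * τ))
      = levelEnergy J τ u₀ u₁ v₀ v₁ := by
  set S := Icc 1 (2 * J - 1)
  set a₀ : ℕ → ℝ := fun i => (u₁ i - u₀ i) / τ
  set a₁ : ℕ → ℝ := fun i => (u₂ i - u₁ i) / τ
  set b : ℕ → ℝ := fun i => (u₂ i - u₀ i) / (2 * τ)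
  set vMean : ℕ → ℝ := fun i => (v₂ i + v₀ i) / 2
  have hb : VanishesAtEnds (2 * J) b := ⟨by simp [b, hu₀.1, hu₂.1], by simp [b, hu₀.2, hu₂.2]⟩
  have hvMean : VanishesAtEnds (2 * J) vMean :=
    ⟨by simp [vMean, hv₀.1, hv₂.1], by simp [vMean, hv₀.2, hv₂.2]⟩
  have kinetic : ∀ j ∈ S, 2 * (cA a₁ j ^ 2 - cA a₀ j ^ 2) + 4 * τ * p * cA b j ^ 2
      = -4 * τ * (dxx J vMean j * cA b j) := by
    intro j hj
    have inertia : cA (fun i => (u₂ i - 2 * u₁ i + u₀ i) / τ ^ 2) j * cA b j * (4 * τ)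
        = 2 * (cA a₁ j ^ 2 - cA a₀ j ^ 2) := by
      simp only [cA, a₀, a₁, b]
      field_simp
      ring
    linear_combination (4 * τ * cA b j) * heq₁ j hj - inertia
  have potential : ∀ j ∈ S, 4 * τ * (cA vMean j * dxx J b j) = cA v₂ j ^ 2 - cA v₀ j ^ 2 := by
    intro j hj
    rw [← heq₂ j hj]
    simp only [cA, vMean]
    field_simp
    ring
  have balance : ∑ j ∈ S, (2 * (cA a₁ j ^ 2 - cA a₀ j ^ 2) + 4 * τ * p * cA b j ^ 2)
      = -∑ j ∈ S, (cA v₂ j ^ 2 - cA v₀ j ^ 2) := by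
    calc _ = -4 * τ * ∑ j ∈ S, dxx J vMean j * cA b j := by
          rw [mul_sum]; exact sum_congr rfl kinetic
      _ = -4 * τ * ∑ j ∈ S, cA vMean j * dxx J b j := by rw [sum_dxx_mul_cA_comm hJ hvMean hb]
      _ = _ := by rw [← sum_neg_distrib, mul_sum]; exact sum_congr rfl fun j hj => by
                    rw [← potential j hj]; ring
  simp only [sum_add_distrib, sum_sub_distrib, ← mul_sum] at balance
  simp only [levelEnergy, gridIP, ← pow_two]
  linear_combination (msh J / 2) * balance

theorem stmt_11_general (J N : ℕ) (hJ : 0 < J) (τ : ℝ) (hτ : 0 < τ)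
    (p₀ : ℝ) (hp₀ : 0 < p₀) (P : ℝ → ℝ) (hP : ∀ z : ℝ, 0 ≤ z → p₀ ≤ P z)
    (U V : ℕ → ℕ → ℝ)
    (hUbc : ∀ n, U n 0 = 0 ∧ U n (2 * J) = 0)
    (hVbc : ∀ n, V n 0 = 0 ∧ V n (2 * J) = 0)
    (hs1 : ∀ n ∈ Finset.Icc 1 N, ∀ j ∈ Finset.Icc 1 (2 * J - 1),
      cA (fun i => (U (n + 1) i - 2 * U n i + U (n - 1) i) / τ ^ 2) j
          + P (gridNormB J (V n) ^ 2)
              * cA (fun i => (U (n + 1) i - U (n - 1) i) / (2 * τ)) j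
          + dxx J (fun i => (V (n + 1) i + V (n - 1) i) / 2) j
        = 0)
    (hs2 : ∀ n ∈ Finset.Icc 1 N, ∀ j ∈ Finset.Icc 1 (2 * J - 1),
      cA (fun i => (V (n + 1) i - V (n - 1) i) / (2 * τ)) j
        = dxx J (fun i => (U (n + 1) i - U (n - 1) i) / (2 * τ)) j) :
    ∀ n ∈ Finset.Icc 1 N,
      0 ≤ energyE J τ U V n ∧ energyE J τ U V n ≤ energyE J τ U V 0 := by
  set E : ℕ → ℝ := fun n => levelEnergy J τ (U n) (U (n + 1)) (V n) (V (n + 1))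
  have step : ∀ n < N, E (n + 1) ≤ E n := by
    intro n hn
    have hmem : n + 1 ∈ Icc 1 N := mem_Icc.2 ⟨by omega, hn⟩
    have hp : 0 ≤ P (gridNormB J (V (n + 1)) ^ 2) := hp₀.le.trans (hP _ (sq_nonneg _))
    have identity := levelEnergy_add_damping_eq hJ hτ.ne' _ (v₁ := V (n + 1))
      (hUbc _) (hUbc _) (hVbc _) (hVbc _) (hs1 _ hmem) (hs2 _ hmem)
    simp only [Nat.add_sub_cancel] at identity
    have damping_nonneg := mul_nonneg (mul_nonneg (mul_nonneg zero_le_two hτ.le) hp)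
      (gridIP_self_nonneg J (cA fun i => (U (n + 1 + 1) i - U n i) / (2 * τ)))
    simp only [E]
    linarith
  have decay : ∀ n ≤ N, E n ≤ E 0 := by
    intro n
    induction n with
    | zero => exact fun _ => le_rfl
    | succ n ih => intro hn; exact (step n hn).trans (ih (by omega))
  intro n hn
  rw [energyE_eq_sqrt_levelEnergy, energyE_eq_sqrt_levelEnergy]
  exact ⟨Real.sqrt_nonneg _, Real.sqrt_le_sqrt (decay n (mem_Icc.1 hn).2)⟩

/-- energy dissipation of the fully discrete compact scheme (Corollary 3.1). -/
theorem stmt_11 (J N : ℕ) (hJ : 0 < J) (hN : 0 < N) (τ : ℝ) (hτ : 0 < τ)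
    (p₀ : ℝ) (hp₀ : 0 < p₀) (P : ℝ → ℝ) (hP : ∀ z : ℝ, 0 ≤ z → p₀ ≤ P z)
    (U V : ℕ → ℕ → ℝ)
    (hUbc : ∀ n, U n 0 = 0 ∧ U n (2 * J) = 0)
    (hVbc : ∀ n, V n 0 = 0 ∧ V n (2 * J) = 0)
    (hs1 : ∀ n ∈ Finset.Icc 1 N, ∀ j ∈ Finset.Icc 1 (2 * J - 1),
      cA (fun i => (U (n + 1) i - 2 * U n i + U (n - 1) i) / τ ^ 2) j
          + P (gridNormB J (V n) ^ 2)
              * cA (fun i => (U (n + 1) i - U (n - 1) i) / (2 * τ)) j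
          + dxx J (fun i => (V (n + 1) i + V (n - 1) i) / 2) j
        = 0)
    (hs2 : ∀ n ∈ Finset.Icc 1 N, ∀ j ∈ Finset.Icc 1 (2 * J - 1),
      cA (fun i => (V (n + 1) i - V (n - 1) i) / (2 * τ)) j
        = dxx J (fun i => (U (n + 1) i - U (n - 1) i) / (2 * τ)) j) :
    ∀ n ∈ Finset.Icc 1 N,
      0 ≤ energyE J τ U V n ∧ energyE J τ U V n ≤ energyE J τ U V 0 :=
  stmt_11_general J N hJ τ hτ p₀ hp₀ P hP U V hUbc hVbc hs1 hs2
end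
end
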